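/- arXiv:1704.03149 — 2 statements merged into one kernel-verified Lean document; each statement's English description precedes it below -/
import Mathlib

section
/- For a convex polytope Δ ⊂ R^3 and a point v ∉ Δ, the radial (central) projection from v of the union of faces of Δ visible from v onto a plane W separating v from Δ is a convex polygon. -/
/-!
Let `π` be the central projection from `v` onto `W = {f = c}`. Every point of `Δ` lies on a ray
from `v` whose first point in `Δ` (which exists since `Δ` is closed) is visible, and `π` is
constant on rays, so the projection of the visible part is `π(Δ)`. Moreover `π` is a perspective
map: it sends the center of mass of points `zᵢ` with weights `wᵢ` to the center of mass of the
`π zᵢ` with weights `wᵢ (f zᵢ - f v)`. Hence `π` maps `Δ = conv s` onto the polygon `conv (π s)`.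
-/

open MeasureTheory Set

noncomputable section

open Finset

lemma Finset.sum_mul_pos_of_sum_pos {R ι : Type*} [Semiring R] [LinearOrder R]
    [IsStrictOrderedRing R] {t : Finset ι} {w d : ι → R}
    (hw : ∀ i ∈ t, 0 ≤ w i) (hsum : 0 < ∑ i ∈ t, w i) (hd : ∀ i ∈ t, 0 < d i) :
    0 < ∑ i ∈ t, w i * d i := by
  obtain ⟨i, hi, hwi⟩ := exists_lt_of_sum_lt (f := fun _ => (0 : R)) (by simpa using hsum)
  exact sum_pos' (fun j hj => mul_nonneg (hw j hj) (hd j hj).le) ⟨i, hi, mul_pos hwi (hd i hi)⟩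

section CentralProjection

variable {𝕜 E : Type*} [Field 𝕜] [AddCommGroup E] [Module 𝕜 E]

/-- The point where the line through `v` and `x` meets the hyperplane `f = c` (junk value `v` when
the line is parallel to it). -/
def centralProj (f : E →ₗ[𝕜] 𝕜) (c : 𝕜) (v x : E) : E :=
  v + ((c - f v) / (f x - f v)) • (x - v)

variable {f : E →ₗ[𝕜] 𝕜} {c : 𝕜} {v x : E}

lemma apply_centralProj (hx : f x ≠ f v) : f (centralProj f c v x) = c := by
  have : f x - f v ≠ 0 := sub_ne_zero.2 hx
  simp only [centralProj, map_add, map_smul, map_sub, smul_eq_mul]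
  field_simp
  ring

lemma add_smul_sub_eq_centralProj {t : 𝕜} (hx : f x ≠ f v) (ht : f (v + t • (x - v)) = c) :
    v + t • (x - v) = centralProj f c v x := by
  have : f x - f v ≠ 0 := sub_ne_zero.2 hx
  simp only [map_add, map_smul, map_sub, smul_eq_mul] at ht
  rw [centralProj, ← ht]
  congr 2
  field_simp
  ring

lemma centralProj_add_smul_sub {t : 𝕜} (ht : t ≠ 0) (hx : f x ≠ f v) :
    centralProj f c v (v + t • (x - v)) = centralProj f c v x := by
  have : f x - f v ≠ 0 := sub_ne_zero.2 hx
  simp only [centralProj, map_add, map_smul, map_sub, smul_eq_mul, add_sub_cancel_left, smul_smul]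
  congr 2
  field_simp

lemma centralProj_centerMass {ι : Type*} {t : Finset ι} {w : ι → 𝕜} {z : ι → E}
    (hz : ∀ i ∈ t, f (z i) ≠ f v) (hw : ∑ i ∈ t, w i ≠ 0)
    (hb : ∑ i ∈ t, w i * (f (z i) - f v) ≠ 0) :
    centralProj f c v (t.centerMass w z) =
      t.centerMass (fun i => w i * (f (z i) - f v)) (fun i => centralProj f c v (z i)) := by
  set y := t.centerMass w z
  have hy : (∑ i ∈ t, w i) • (y - v) = ∑ i ∈ t, w i • (z i - v) := by
    simp only [y, centerMass, smul_sub, smul_smul, mul_inv_cancel₀ hw, one_smul, sum_sub_distrib,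
      sum_smul]
  have hfy : ∑ i ∈ t, w i * (f (z i) - f v) = (∑ i ∈ t, w i) * (f y - f v) := by
    have := congrArg f hy
    simpa [map_sum, map_sub, smul_eq_mul] using this.symm
  have hterm : ∀ i ∈ t, (w i * (f (z i) - f v)) • centralProj f c v (z i) =
      (w i * (f (z i) - f v)) • v + (c - f v) • w i • (z i - v) := by
    intro i hi
    have : f (z i) - f v ≠ 0 := sub_ne_zero.2 (hz i hi)
    rw [centralProj, smul_add, smul_smul, smul_smul]
    congr 2
    field_simp
  have hfy' : f y - f v ≠ 0 := fun h => hb (by rw [hfy, h, mul_zero])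
  rw [centerMass, sum_congr rfl hterm, sum_add_distrib, ← sum_smul, ← smul_sum, ← hy, hfy,
    centralProj, smul_add, smul_smul, smul_smul, inv_mul_cancel₀ (mul_ne_zero hw hfy'), one_smul,
    smul_smul]
  congr 2
  field_simp

end CentralProjection

section

variable {𝕜 E : Type*} [Field 𝕜] [LinearOrder 𝕜] [IsStrictOrderedRing 𝕜]
  [AddCommGroup E] [Module 𝕜 E] {f : E →ₗ[𝕜] 𝕜} {c : 𝕜} {v : E} {s : Set E}

theorem centralProj_image_convexHull (hs : ∀ x ∈ s, f v < f x) :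
    centralProj f c v '' convexHull 𝕜 s = convexHull 𝕜 (centralProj f c v '' s) := by
  have hd : ∀ x ∈ s, 0 < f x - f v := fun x hx => sub_pos.2 (hs x hx)
  apply Set.Subset.antisymm
  · rintro _ ⟨y, hy, rfl⟩
    obtain ⟨ι, t, w, z, hw₀, hw₁, hz, rfl⟩ := (convexHull_eq s).subset hy
    have hb := sum_mul_pos_of_sum_pos hw₀ (hw₁ ▸ one_pos) fun i hi => hd _ (hz i hi)
    rw [centralProj_centerMass (fun i hi => (hs _ (hz i hi)).ne') (by rw [hw₁]; exact one_ne_zero)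
      hb.ne']
    exact centerMass_mem_convexHull t (fun i hi => mul_nonneg (hw₀ i hi) (hd _ (hz i hi)).le) hb
      fun i hi => mem_image_of_mem _ (hz i hi)
  · rw [_root_.convexHull_eq]
    rintro _ ⟨ι, t, b, q, hb₀, hb₁, hq, rfl⟩
    choose! z hz hzq using hq
    -- dividing the weights by `f (z i) - f v` undoes the reweighting of `centralProj_centerMass`
    have hwb : ∀ i ∈ t, b i * (f (z i) - f v)⁻¹ * (f (z i) - f v) = b i :=
      fun i hi => inv_mul_cancel_right₀ (hd _ (hz i hi)).ne' _
    have hw := sum_mul_pos_of_sum_pos hb₀ (hb₁ ▸ one_pos) (fun i hi => inv_pos.2 (hd _ (hz i hi)))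
    refine ⟨t.centerMass (fun i => b i * (f (z i) - f v)⁻¹) z, centerMass_mem_convexHull t
      (fun i hi => mul_nonneg (hb₀ i hi) (inv_pos.2 (hd _ (hz i hi))).le) hw hz, ?_⟩
    rw [centralProj_centerMass (fun i hi => (hs _ (hz i hi)).ne') hw.ne'
        (by rw [sum_congr rfl hwb, hb₁]; exact one_ne_zero),
      centerMass_congr_weights hwb, centerMass_congr_fun (fun i hi _ => hzq i hi)]

end

theorem IsClosed.exists_segment_inter_eq_singleton {E : Type*} [AddCommGroup E] [Module ℝ E]
    [TopologicalSpace E] [ContinuousAdd E] [ContinuousSMul ℝ E] {Δ : Set E} (hΔ : IsClosed Δ)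
    {v y : E} (hv : v ∉ Δ) (hy : y ∈ Δ) :
    ∃ t : ℝ, 0 < t ∧ segment ℝ (v + t • (y - v)) v ∩ Δ = {v + t • (y - v)} := by
  set T := Icc (0 : ℝ) 1 ∩ (fun t : ℝ => v + t • (y - v)) ⁻¹' Δ
  have hT : IsClosed T := isClosed_Icc.inter (hΔ.preimage (by fun_prop))
  have hbdd : BddBelow T := ⟨0, fun t ht => ht.1.1⟩
  have ht₀ : sInf T ∈ T := hT.csInf_mem ⟨1, ⟨zero_le_one, le_rfl⟩, by simpa using hy⟩ hbdd
  have hpos : 0 < sInf T := ht₀.1.1.lt_of_ne fun h => hv (by simpa [← h] using ht₀.2)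
  refine ⟨sInf T, hpos,
    Subset.antisymm ?_ (singleton_subset_iff.2 ⟨left_mem_segment ℝ _ _, ht₀.2⟩)⟩
  rintro _ ⟨hz, hzΔ⟩
  rw [segment_symm, segment_eq_image_lineMap] at hz
  obtain ⟨θ, hθ, rfl⟩ := hz
  have hθT : θ * sInf T ∈ T := by
    refine ⟨⟨mul_nonneg hθ.1 ht₀.1.1, mul_le_one₀ hθ.2 ht₀.1.1 ht₀.1.2⟩, ?_⟩
    show v + (θ * sInf T) • (y - v) ∈ Δ
    rwa [AffineMap.lineMap_apply_module', add_sub_cancel_left, smul_smul, add_comm] at hzΔ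
  have hθ1 : θ = 1 :=
    le_antisymm hθ.2 (le_of_mul_le_mul_right (by simpa using csInf_le hbdd hθT) hpos)
  simp [hθ1]

theorem planar_projection_of_visible_convex_general (s : Set (EuclideanSpace ℝ (Fin 3)))
    (hs : s.Finite) (Δ : Set (EuclideanSpace ℝ (Fin 3))) (hΔ : Δ = convexHull ℝ s)
    (v : EuclideanSpace ℝ (Fin 3)) (hv : v ∉ Δ)
    (f : EuclideanSpace ℝ (Fin 3) →L[ℝ] ℝ) (c : ℝ)
    (hsep₁ : f v < c) (hsep₂ : ∀ x ∈ Δ, c < f x)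
    (Vis : Set (EuclideanSpace ℝ (Fin 3)))
    (hVis : Vis = {x | x ∈ Δ ∧ segment ℝ x v ∩ Δ = {x}})
    (Pr : Set (EuclideanSpace ℝ (Fin 3)))
    (hPr : Pr = {w | f w = c ∧ ∃ y ∈ Vis, ∃ t : ℝ, w = v + t • (y - v)}) :
    Convex ℝ Pr ∧ ∃ u : Set (EuclideanSpace ℝ (Fin 3)), u.Finite ∧ Pr = convexHull ℝ u := by
  have hΔcl : IsClosed Δ := hΔ ▸ hs.isClosed_convexHull (𝕜 := ℝ)
  set g : EuclideanSpace ℝ (Fin 3) →ₗ[ℝ] ℝ := f.toLinearMap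
  have hfar : ∀ x ∈ Δ, g v < g x := fun x hx => hsep₁.trans (hsep₂ x hx)
  have hPrΔ : Pr = centralProj g c v '' Δ := by
    subst hPr hVis
    ext w
    constructor
    · rintro ⟨hw, y, ⟨hy, -⟩, t, rfl⟩
      exact ⟨y, hy, (add_smul_sub_eq_centralProj (hfar y hy).ne' hw).symm⟩
    · rintro ⟨y, hy, rfl⟩
      obtain ⟨t, ht, hvis⟩ := hΔcl.exists_segment_inter_eq_singleton hv hy
      refine ⟨apply_centralProj (hfar y hy).ne', v + t • (y - v),
        ⟨(hvis.symm.subset rfl).2, hvis⟩, _, (centralProj_add_smul_sub ht.ne' (hfar y hy).ne').symm⟩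
  rw [hPrΔ, hΔ, centralProj_image_convexHull fun x hx => hfar x (hΔ ▸ subset_convexHull ℝ s hx)]
  exact ⟨convex_convexHull ℝ _, _, hs.image _, rfl⟩

/-- the radial projection from `v` of the union of the faces of a convex
polytope `Δ` visible from `v ∉ Δ`, onto a plane `W = {f = c}` separating `v` from `Δ`,
is a convex polygon (the convex hull of finitely many points). A point `x` of `Δ` is
visible from `v` if the segment `[x, v]` meets `Δ` only in `x`. -/
theorem planar_projection_of_visible_convex (s : Set (EuclideanSpace ℝ (Fin 3)))
    (hs : s.Finite) (Δ : Set (EuclideanSpace ℝ (Fin 3))) (hΔ : Δ = convexHull ℝ s)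
    (hnd : volume Δ ≠ 0)
    (v : EuclideanSpace ℝ (Fin 3)) (hv : v ∉ Δ)
    (f : EuclideanSpace ℝ (Fin 3) →L[ℝ] ℝ) (c : ℝ)
    (hsep₁ : f v < c) (hsep₂ : ∀ x ∈ Δ, c < f x)
    (Vis : Set (EuclideanSpace ℝ (Fin 3)))
    (hVis : Vis = {x | x ∈ Δ ∧ segment ℝ x v ∩ Δ = {x}})
    (Pr : Set (EuclideanSpace ℝ (Fin 3)))
    (hPr : Pr = {w | f w = c ∧ ∃ y ∈ Vis, ∃ t : ℝ, w = v + t • (y - v)}) :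
    Convex ℝ Pr ∧ ∃ u : Set (EuclideanSpace ℝ (Fin 3)), u.Finite ∧ Pr = convexHull ℝ u :=
  planar_projection_of_visible_convex_general s hs Δ hΔ v hv f c hsep₁ hsep₂ Vis hVis Pr hPr
end
end

section
/- Let R^d be partitioned into finitely many polyhedral cells D_i with pairwise disjoint interiors, with convex functions F_i : D_i → R agreeing on intersections, defining a continuous function F : R^d → R. If for every point v in the common boundary of two cells D_i, D_j (but in no third cell) and every ω ≠ 0 with v − ω ∈ D_i and v + ω ∈ D_j there exists t ∈ (0,1) with F(v) ≤ (F_i(v − tω) + F_j(v + tω))/2, then F is convex on R^d. Moreover if each F_i is strictly convex then F is strictly convex. -/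
/-!
Along a segment that meets no point common to three cells, `F` satisfies a local midpoint
inequality at every interior point of the segment: inside a cell by convexity, at an interface
between two cells by hypothesis. A continuous function of one variable with this property lies
below its chords, since its difference with the chord cannot have an interior rightmost
maximiser. Three convex bodies with pairwise disjoint interiors meet in a set of codimension at
least two: if the intersection spanned a hyperplane, that hyperplane would separate two of the
bodies, and the third would lie near the intersection on the same side as one of them, so their
interiors would overlap. Hence segments avoiding all triple intersections are dense among pairs
of endpoints, and continuity of `F` gives convexity. For strict convexity, a chord along which
equality held would contain a nondegenerate piece lying in a single cell, where `F` is strictly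
below its chord.
-/

open Set

noncomputable section

variable {d : ℕ}

/-- A polyhedral cell: a closed convex set with nonempty interior whose boundary is
contained in finitely many hyperplanes. -/
def IsPolyhedralCell (D : Set (EuclideanSpace ℝ (Fin d))) : Prop :=
  Convex ℝ D ∧ IsClosed D ∧ (interior D).Nonempty ∧
    ∃ (k : ℕ) (f : Fin k → (EuclideanSpace ℝ (Fin d) →L[ℝ] ℝ)) (c : Fin k → ℝ),
      (∀ j, f j ≠ 0) ∧ frontier D ⊆ ⋃ j, {x | f j x = c j}

open Filter Topology Module

theorem le_max_of_frequently_le_midpoint {φ : ℝ → ℝ} {a b : ℝ}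
    (hφ : ContinuousOn φ (Icc a b))
    (hmid : ∀ t ∈ Ioo a b, ∃ᶠ h in 𝓝[>] 0, φ t ≤ (φ (t - h) + φ (t + h)) / 2)
    {t : ℝ} (ht : t ∈ Icc a b) : φ t ≤ max (φ a) (φ b) := by
  obtain ⟨x₀, hx₀, hmax⟩ := isCompact_Icc.exists_isMaxOn ⟨t, ht⟩ hφ
  obtain ⟨s, ⟨hs, hφs : φ s = φ x₀⟩, hsup⟩ := (isCompact_Icc.of_isClosed_subset
    (hφ.preimage_isClosed_of_isClosed isClosed_Icc isClosed_singleton) inter_subset_left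
    ).exists_isGreatest ⟨x₀, hx₀, rfl⟩
  suffices s = a ∨ s = b by
    refine (hmax ht).trans ?_
    rcases this with rfl | rfl <;> simp [← hφs]
  by_contra! hne
  have hs' : s ∈ Ioo a b := ⟨hs.1.lt_of_ne' hne.1, hs.2.lt_of_ne hne.2⟩
  have hsmall : ∀ᶠ h in 𝓝[>] (0 : ℝ), 0 < h ∧ h < min (s - a) (b - s) :=
    eventually_mem_nhdsWithin.and
      (nhdsWithin_le_nhds (eventually_lt_nhds (by simpa using hs')))
  obtain ⟨h, hmid, hpos, hlt⟩ := ((hmid s hs').and_eventually hsmall).exists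
  rw [lt_min_iff] at hlt
  have hleft : φ (s - h) ≤ φ x₀ := hmax ⟨by linarith, by linarith [hs'.2]⟩
  have hright : φ (s + h) ≤ φ x₀ := hmax ⟨by linarith [hs'.1], by linarith⟩
  have : s + h ∈ Icc a b ∩ φ ⁻¹' {φ x₀} :=
    ⟨⟨by linarith [hs'.1], by linarith⟩, by
      simp only [mem_preimage, mem_singleton_iff]; linarith⟩
  linarith [hsup this]

theorem le_chord_of_frequently_le_midpoint {g : ℝ → ℝ} (hg : ContinuousOn g (Icc 0 1))
    (hmid : ∀ t ∈ Ioo 0 1, ∃ᶠ h in 𝓝[>] 0, g t ≤ (g (t - h) + g (t + h)) / 2)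
    {t : ℝ} (ht : t ∈ Icc 0 1) : g t ≤ (1 - t) * g 0 + t * g 1 := by
  have hφ : ContinuousOn (fun s => g s - ((1 - s) * g 0 + s * g 1)) (Icc 0 1) :=
    hg.sub (by fun_prop)
  have := le_max_of_frequently_le_midpoint hφ
    (fun s hs => (hmid s hs).mono fun h hh => by linarith) ht
  simp only [sub_zero, zero_mul, one_mul, sub_self, zero_add, add_zero, max_self] at this
  linarith

theorem ConvexOn.le_chord {g : ℝ → ℝ} (hg : ConvexOn ℝ (Icc 0 1) g) {t : ℝ}
    (ht : t ∈ Icc (0 : ℝ) 1) : g t ≤ (1 - t) * g 0 + t * g 1 := by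
  simpa using hg.2 (left_mem_Icc.2 zero_le_one) (right_mem_Icc.2 zero_le_one)
    (sub_nonneg.2 ht.2) ht.1 (by ring)

theorem ConvexOn.lt_chord_of_lt_chord {g : ℝ → ℝ} (hg : ConvexOn ℝ (Icc 0 1) g) {b c : ℝ}
    (hb : 0 < b) (hbc : b ≤ c) (hc : c ≤ 1) (hlt : g c < (1 - c) * g 0 + c * g 1) :
    g b < (1 - b) * g 0 + b * g 1 := by
  have hc0 : 0 < c := hb.trans_le hbc
  have hconv := hg.2 (left_mem_Icc.2 zero_le_one) ⟨hc0.le, hc⟩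
    (sub_nonneg.2 ((div_le_one hc0).2 hbc)) (div_nonneg hb.le hc0.le) (sub_add_cancel 1 (b / c))
  rw [smul_eq_mul, smul_eq_mul, mul_zero, zero_add, div_mul_cancel₀ b hc0.ne'] at hconv
  calc g b ≤ (1 - b / c) * g 0 + b / c * g c := hconv
    _ < (1 - b / c) * g 0 + b / c * ((1 - c) * g 0 + c * g 1) := by gcongr
    _ = (1 - b) * g 0 + b * g 1 := by field_simp; ring

theorem AffineMap.lineMap_add {k V : Type*} [Ring k] [AddCommGroup V] [Module k V] (x y : V)
    (t h : k) : lineMap x y (t + h) = lineMap x y t + h • (y - x) := by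
  rw [lineMap_apply_module', lineMap_apply_module', add_smul]
  abel

section ConvexBodies

variable {E : Type*} [NormedAddCommGroup E] [NormedSpace ℝ E]

theorem apply_lt_of_mem_interior {s : Set E} {f : E →L[ℝ] ℝ} (hf : f ≠ 0) {c : ℝ}
    (hs : ∀ z ∈ s, f z ≤ c) {p : E} (hp : p ∈ interior s) : f p < c := by
  have : f '' interior s ⊆ interior (Iic c) :=
    interior_maximal (image_subset_iff.2 fun z hz => hs z (interior_subset hz))
      (f.isOpenMap_of_ne_zero hf _ isOpen_interior)
  simpa [interior_Iic] using this (mem_image_of_mem f hp)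

theorem exists_mem_interior_apply_ne {s : Set E} {f : E →L[ℝ] ℝ} (hf : f ≠ 0)
    (hs : (interior s).Nonempty) (c : ℝ) : ∃ p ∈ interior s, f p ≠ c := by
  by_contra! h
  have himage : f '' interior s = {c} :=
    (hs.image f).subset_singleton_iff.1 (by rintro _ ⟨p, hp, rfl⟩; exact h p hp)
  exact not_isOpen_singleton c (himage ▸ f.isOpenMap_of_ne_zero hf _ isOpen_interior)

theorem exists_separating_of_disjoint_interior {s t : Set E} (hs : Convex ℝ s)
    (ht : Convex ℝ t) (hsi : (interior s).Nonempty) (hti : (interior t).Nonempty)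
    (hst : Disjoint (interior s) (interior t)) :
    ∃ (f : E →L[ℝ] ℝ) (c : ℝ), f ≠ 0 ∧ (∀ z ∈ s, f z ≤ c) ∧ ∀ z ∈ t, c ≤ f z := by
  obtain ⟨f, c, hf, hfs, hft⟩ :=
    geometric_hahn_banach_of_nonempty_interior hs ht.interior hst hsi hti
  refine ⟨f, c, hf, hfs, fun z hz => ?_⟩
  have htcl : t ⊆ closure (interior t) :=
    ht.closure_interior_eq_closure_of_nonempty_interior hti ▸ subset_closure
  exact closure_minimal hft (isClosed_Ici.preimage f.continuous) (htcl hz)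

theorem eventually_mem_interior_of_apply_lt {s : Set E} (hs : Convex ℝ s) {f : E →L[ℝ] ℝ}
    {c : ℝ} {p z : E} (hp : p ∈ interior s) (hfp : f p < c) (hfz : f z = c)
    (hsz : s ∈ 𝓝[{y | f y = c}] z) : ∀ᶠ y in 𝓝 z, f y < c → y ∈ interior s := by
  -- write `y = θ y • p + (1 - θ y) • q y` with `q y` on the hyperplane `f = c`
  set θ : E → ℝ := fun y => (c - f y) / (c - f p)
  set q : E → E := fun y => (1 - θ y)⁻¹ • (y - θ y • p)
  have hcp : c - f p ≠ 0 := by linarith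
  have hθ : Tendsto θ (𝓝 z) (𝓝 0) := by
    simpa [θ, hfz] using ((tendsto_const_nhds (x := c)).sub (f.continuous.tendsto z)).div_const
      (c - f p)
  have hθ1 : ∀ᶠ y in 𝓝 z, θ y < 1 := hθ.eventually (eventually_lt_nhds one_pos)
  have hq : Tendsto q (𝓝 z) (𝓝[{y | f y = c}] z) := by
    refine tendsto_nhdsWithin_iff.2 ⟨?_, hθ1.mono fun y hy => ?_⟩
    · simpa using ((tendsto_const_nhds.sub hθ).inv₀ (by norm_num : (1 : ℝ) - 0 ≠ 0)).smul
        (tendsto_id.sub (hθ.smul (tendsto_const_nhds (x := p))))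
    · have hθy : θ y * (c - f p) = c - f y := div_mul_cancel₀ _ hcp
      simp only [q, mem_ofPred_eq, map_smul, map_sub, smul_eq_mul]
      rw [inv_mul_eq_iff_eq_mul₀ (by linarith)]
      linarith
  filter_upwards [hθ1, hq.eventually hsz] with y hy1 hys hfy
  have hθpos : 0 < θ y := div_pos (by linarith) (by linarith)
  have : θ y • p + (1 - θ y) • q y = y := by
    simp only [q, smul_smul, mul_inv_cancel₀ (by linarith : 1 - θ y ≠ 0), one_smul]
    abel
  exact this ▸ hs.combo_interior_self_mem_interior hp hys hθpos (by linarith) (by ring)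

theorem not_disjoint_interior_of_mem_nhdsWithin {s t : Set E} (hs : Convex ℝ s)
    (ht : Convex ℝ t) {f : E →L[ℝ] ℝ} {c : ℝ} {p q z : E} (hp : p ∈ interior s)
    (hq : q ∈ interior t) (hfp : f p < c) (hfq : f q < c) (hfz : f z = c)
    (hsz : s ∈ 𝓝[{y | f y = c}] z) (htz : t ∈ 𝓝[{y | f y = c}] z) :
    ¬ Disjoint (interior s) (interior t) := by
  have hpath : Tendsto (fun τ : ℝ => z + τ • (p - z)) (𝓝[>] 0) (𝓝 z) := by
    simpa using ((by fun_prop : Continuous fun τ : ℝ => z + τ • (p - z)).tendsto 0).mono_left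
      nhdsWithin_le_nhds
  have hbelow : ∀ᶠ τ in 𝓝[>] (0 : ℝ), f (z + τ • (p - z)) < c :=
    eventually_mem_nhdsWithin.mono fun τ hτ => by
      simp only [map_add, map_smul, map_sub, smul_eq_mul, hfz]
      nlinarith [mem_Ioi.1 hτ]
  obtain ⟨τ, ⟨hτs, hτt⟩, hτ⟩ := ((hpath.eventually
    ((eventually_mem_interior_of_apply_lt hs hp hfp hfz hsz).and
      (eventually_mem_interior_of_apply_lt ht hq hfq hfz htz))).and hbelow).exists
  exact not_disjoint_iff.2 ⟨_, hτs hτ, hτt hτ⟩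

theorem vectorSpan_le_ker_of_forall_apply_eq {C : Set E} {f : E →L[ℝ] ℝ} {c : ℝ}
    (hC : ∀ z ∈ C, f z = c) : vectorSpan ℝ C ≤ LinearMap.ker (f : E →ₗ[ℝ] ℝ) := by
  rw [vectorSpan_def, Submodule.span_le]
  rintro _ ⟨z, hz, z', hz', rfl⟩
  simp [hC z hz, hC z' hz']

theorem mem_nhdsWithin_affineSpan_of_mem_intrinsicInterior {C : Set E} {z : E}
    (hz : z ∈ intrinsicInterior ℝ C) : C ∈ 𝓝[affineSpan ℝ C] z := by
  obtain ⟨y, hy, rfl⟩ := mem_intrinsicInterior.1 hz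
  exact mem_of_superset (mem_nhds_subtype_iff_nhdsWithin.1 (mem_interior_iff_mem_nhds.1 hy))
    (image_preimage_subset _ _)

theorem finrank_vectorSpan_inter_add_two_le [FiniteDimensional ℝ E] {s t r : Set E}
    (hs : Convex ℝ s) (ht : Convex ℝ t) (hr : Convex ℝ r) (hsi : (interior s).Nonempty)
    (hti : (interior t).Nonempty) (hri : (interior r).Nonempty)
    (hst : Disjoint (interior s) (interior t)) (hsr : Disjoint (interior s) (interior r))
    (htr : Disjoint (interior t) (interior r)) (hne : (s ∩ t ∩ r).Nonempty) :
    finrank ℝ (vectorSpan ℝ (s ∩ t ∩ r)) + 2 ≤ finrank ℝ E := by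
  set C := s ∩ t ∩ r
  obtain ⟨f, c, hf, hfs, hft⟩ := exists_separating_of_disjoint_interior hs ht hsi hti hst
  have hfC : ∀ z ∈ C, f z = c := fun z hz => le_antisymm (hfs z hz.1.1) (hft z hz.1.2)
  by_contra! hcodim
  have hker : vectorSpan ℝ C = LinearMap.ker (f : E →ₗ[ℝ] ℝ) := by
    refine Submodule.eq_of_le_of_finrank_le (vectorSpan_le_ker_of_forall_apply_eq hfC) ?_
    have := Module.Dual.finrank_ker_add_one_of_ne_zero (f := (f : E →ₗ[ℝ] ℝ))
      (by exact_mod_cast hf)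
    omega
  have hspan : (affineSpan ℝ C : Set E) = {y | f y = c} := by
    obtain ⟨z₀, hz₀⟩ := hne
    ext y
    rw [SetLike.mem_coe, ← AffineSubspace.vsub_right_mem_direction_iff_mem
      (mem_affineSpan ℝ hz₀), direction_affineSpan, hker]
    simp [hfC z₀ hz₀, sub_eq_zero]
  obtain ⟨z, hz⟩ := hne.intrinsicInterior ((hs.inter ht).inter hr)
  have hCz : C ∈ 𝓝[{y | f y = c}] z :=
    hspan ▸ mem_nhdsWithin_affineSpan_of_mem_intrinsicInterior hz
  have hfz : f z = c := hfC z (intrinsicInterior_subset hz)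
  obtain ⟨w, hw, hfw⟩ := exists_mem_interior_apply_ne hf hri c
  rcases hfw.lt_or_gt with hlt | hgt
  · obtain ⟨p, hp⟩ := hsi
    exact not_disjoint_interior_of_mem_nhdsWithin hs hr hp hw
      (apply_lt_of_mem_interior hf hfs hp) hlt hfz (mem_of_superset hCz fun _ h => h.1.1)
      (mem_of_superset hCz fun _ h => h.2) hsr
  · obtain ⟨q, hq⟩ := hti
    have hneg : {y | (-f) y = -c} = {y | f y = c} := by simp
    exact not_disjoint_interior_of_mem_nhdsWithin (f := -f) (c := -c) ht hr hq hw
      (apply_lt_of_mem_interior (neg_ne_zero.2 hf) (fun z hz => by simpa using hft z hz) hq)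
      (by simpa using hgt) (by simpa using hfz) (hneg ▸ mem_of_superset hCz fun _ h => h.1.2)
      (hneg ▸ mem_of_superset hCz fun _ h => h.2) htr

theorem AffineSubspace.affineSpan_insert_ne_top {A : AffineSubspace ℝ E}
    (hA : finrank ℝ A.direction + 2 ≤ finrank ℝ E) (x : E) :
    affineSpan ℝ (insert x (A : Set E)) ≠ ⊤ := fun h => by
  have := finrank_vectorSpan_insert_le A x
  rw [← direction_affineSpan, h, AffineSubspace.direction_top, finrank_top] at this
  omega

theorem AffineSubspace.dense_compl_biUnion [FiniteDimensional ℝ E]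
    {S : Set (AffineSubspace ℝ E)} (hS : S.Finite) (hne : ∀ A ∈ S, A ≠ ⊤) :
    Dense (⋃ A ∈ S, (A : Set E))ᶜ := by
  rw [compl_iUnion₂]
  refine dense_biInter_of_isOpen (fun A _ => A.closed_of_finiteDimensional.isOpen_compl)
    hS.countable fun A hA => ?_
  rw [← interior_eq_empty_iff_dense_compl, ← not_nonempty_iff_eq_empty]
  intro hint
  refine hne A hA (top_unique ?_)
  calc ⊤ = affineSpan ℝ (interior (A : Set E)) := (isOpen_interior.affineSpan_eq_top hint).symm
    _ ≤ A := affineSpan_le.2 interior_subset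

theorem dense_setOf_disjoint_segment_biUnion [FiniteDimensional ℝ E]
    {S : Set (AffineSubspace ℝ E)} (hS : S.Finite)
    (hcodim : ∀ A ∈ S, finrank ℝ A.direction + 2 ≤ finrank ℝ E) :
    Dense {p : E × E | Disjoint (segment ℝ p.1 p.2) (⋃ A ∈ S, (A : Set E))} := by
  have hle : ∀ (A : AffineSubspace ℝ E) x, A ≤ affineSpan ℝ (insert x (A : Set E)) :=
    fun A x => (AffineSubspace.affineSpan_coe A).symm.trans_le
      (affineSpan_mono ℝ (subset_insert x _))
  rw [Metric.dense_iff]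
  rintro ⟨x, y⟩ r hr
  -- the first endpoint avoids every `A`, the second every affine span of `A` and the first
  obtain ⟨x', hx'r, hx'⟩ := Metric.dense_iff.1 (AffineSubspace.dense_compl_biUnion hS
    fun A hA h => A.affineSpan_insert_ne_top (hcodim A hA) x (top_unique (h ▸ hle A x))) x r hr
  obtain ⟨y', hy'r, hy'⟩ := Metric.dense_iff.1 (AffineSubspace.dense_compl_biUnion
    (hS.image fun A : AffineSubspace ℝ E => affineSpan ℝ (insert x' (A : Set E)))
    (by rintro _ ⟨A, hA, rfl⟩; exact A.affineSpan_insert_ne_top (hcodim A hA) x')) y r hr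
  refine ⟨(x', y'), by rw [← ball_prod_same]; exact ⟨hx'r, hy'r⟩, disjoint_left.2 ?_⟩
  rintro _ hz hzS
  obtain ⟨A, hA, hzA⟩ := mem_iUnion₂.1 hzS
  rw [segment_eq_image_lineMap] at hz
  obtain ⟨θ, -, rfl⟩ := hz
  rcases eq_or_ne θ 0 with rfl | hθ
  · exact hx' (mem_iUnion₂.2 ⟨A, hA, by simpa using hzA⟩)
  · refine hy' (mem_iUnion₂.2 ⟨_, mem_image_of_mem _ hA, ?_⟩)
    have := AffineMap.lineMap_mem θ⁻¹ (subset_affineSpan ℝ _ (mem_insert x' _)) (hle A x' hzA)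
    rwa [AffineMap.lineMap_lineMap_right, inv_mul_cancel₀ hθ, AffineMap.lineMap_apply_one] at this

theorem convexOn_univ_of_dense {F : E → ℝ} (hF : Continuous F) {P : Set (E × E)}
    (hP : Dense P) (h : ∀ p ∈ P, ∀ a b : ℝ, 0 ≤ a → 0 ≤ b → a + b = 1 →
      F (a • p.1 + b • p.2) ≤ a * F p.1 + b * F p.2) :
    ConvexOn ℝ univ F := by
  refine ⟨convex_univ, fun x _ y _ a b ha hb hab => ?_⟩
  have hclosed : IsClosed {p : E × E | F (a • p.1 + b • p.2) ≤ a * F p.1 + b * F p.2} :=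
    isClosed_le (by fun_prop) (by fun_prop)
  exact hclosed.closure_subset_iff.2 (fun p hp => h p hp a b ha hb hab)
    (hP.closure_eq ▸ mem_univ (x, y))

end ConvexBodies

section Cells

variable {E ι : Type*}

def tripleLocus (D : ι → Set E) : Set E :=
  ⋃ (i) (j) (k) (_ : i ≠ j) (_ : i ≠ k) (_ : j ≠ k), D i ∩ D j ∩ D k

theorem notMem_of_notMem_tripleLocus {D : ι → Set E} {v : E} (hv : v ∉ tripleLocus D)
    {i j : ι} (hij : i ≠ j) (hi : v ∈ D i) (hj : v ∈ D j) {k : ι} (hki : k ≠ i) (hkj : k ≠ j) :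
    v ∉ D k := fun hk => hv <| by
  simp only [tripleLocus, mem_iUnion]
  exact ⟨i, j, k, hij, hki.symm, hkj.symm, ⟨hi, hj⟩, hk⟩

variable [NormedAddCommGroup E] [NormedSpace ℝ E]

def InterfaceMidpointCondition (D : ι → Set E) (F : E → ℝ) : Prop :=
  ∀ i j, i ≠ j → ∀ v ∈ D i ∩ D j, (∀ k, k ≠ i → k ≠ j → v ∉ D k) →
    ∀ ω : E, ω ≠ 0 → v - ω ∈ D i → v + ω ∈ D j →
      ∃ t ∈ Ioo (0 : ℝ) 1, F v ≤ (F (v - t • ω) + F (v + t • ω)) / 2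

theorem exists_finite_affineSubspaces_tripleLocus_subset [Finite ι] [FiniteDimensional ℝ E]
    {D : ι → Set E} (hconv : ∀ i, Convex ℝ (D i)) (hint : ∀ i, (interior (D i)).Nonempty)
    (hdisj : Pairwise fun i j => Disjoint (interior (D i)) (interior (D j))) :
    ∃ S : Set (AffineSubspace ℝ E), S.Finite ∧
      (∀ A ∈ S, finrank ℝ A.direction + 2 ≤ finrank ℝ E) ∧
      tripleLocus D ⊆ ⋃ A ∈ S, (A : Set E) := by
  refine ⟨{A | ∃ i j k, i ≠ j ∧ i ≠ k ∧ j ≠ k ∧ (D i ∩ D j ∩ D k).Nonempty ∧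
    affineSpan ℝ (D i ∩ D j ∩ D k) = A}, ?_, ?_, ?_⟩
  · refine (finite_range fun p : ι × ι × ι => affineSpan ℝ (D p.1 ∩ D p.2.1 ∩ D p.2.2)).subset ?_
    rintro _ ⟨i, j, k, -, -, -, -, rfl⟩
    exact ⟨(i, j, k), rfl⟩
  · rintro _ ⟨i, j, k, hij, hik, hjk, hne, rfl⟩
    rw [direction_affineSpan]
    exact finrank_vectorSpan_inter_add_two_le (hconv i) (hconv j) (hconv k) (hint i) (hint j)
      (hint k) (hdisj hij) (hdisj hik) (hdisj hjk) hne
  · intro z hz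
    simp only [tripleLocus, mem_iUnion] at hz
    obtain ⟨i, j, k, hij, hik, hjk, hz⟩ := hz
    exact mem_iUnion₂.2 ⟨_, ⟨i, j, k, hij, hik, hjk, ⟨z, hz⟩, rfl⟩, subset_affineSpan ℝ _ hz⟩

theorem exists_eventually_mem_of_iUnion_eq_univ [Finite ι] {D : ι → Set E}
    (hconv : ∀ i, Convex ℝ (D i)) (hclosed : ∀ i, IsClosed (D i)) (hcover : ⋃ i, D i = univ)
    (v ω : E) : ∃ i, ∀ᶠ h in 𝓝[≥] (0 : ℝ), v + h • ω ∈ D i := by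
  have hline : (fun h : ℝ => v + h • ω) = AffineMap.lineMap v (v + ω) := by
    ext h; simp [AffineMap.lineMap_apply_module', add_comm]
  obtain ⟨i, hi⟩ : ∃ i, ∃ᶠ h in 𝓝[>] (0 : ℝ), v + h • ω ∈ D i := by
    by_contra! hnot
    obtain ⟨h, hh⟩ := (eventually_all.2 hnot).exists
    obtain ⟨i, hi⟩ := mem_iUnion.1 (hcover.symm ▸ mem_univ (v + h • ω))
    exact hh i hi
  obtain ⟨h₁, hh₁, hpos⟩ := (hi.and_eventually eventually_mem_nhdsWithin).exists
  have hv : v + (0 : ℝ) • ω ∈ D i :=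
    (hclosed i).mem_of_frequently_of_tendsto hi
      (((by fun_prop : Continuous fun h : ℝ => v + h • ω).tendsto 0).mono_left nhdsWithin_le_nhds)
  have hconv' : Convex ℝ ((fun h : ℝ => v + h • ω) ⁻¹' D i) :=
    hline ▸ (hconv i).affine_preimage _
  exact ⟨i, mem_of_superset (Icc_mem_nhdsGE hpos) fun h hh => hconv'.ordConnected.out hv hh₁ hh⟩

theorem frequently_le_midpoint_of_notMem_tripleLocus [Finite ι] {D : ι → Set E}
    (hconv : ∀ i, Convex ℝ (D i)) (hclosed : ∀ i, IsClosed (D i)) (hcover : ⋃ i, D i = univ)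
    {F : E → ℝ} (hF : ∀ i, ConvexOn ℝ (D i) F) (hmid : InterfaceMidpointCondition D F)
    {v ω : E} (hω : ω ≠ 0) (hv : v ∉ tripleLocus D) :
    ∃ᶠ h in 𝓝[>] (0 : ℝ), F v ≤ (F (v - h • ω) + F (v + h • ω)) / 2 := by
  obtain ⟨i, hi⟩ := exists_eventually_mem_of_iUnion_eq_univ hconv hclosed hcover v (-ω)
  obtain ⟨j, hj⟩ := exists_eventually_mem_of_iUnion_eq_univ hconv hclosed hcover v ω
  simp_rw [smul_neg, ← sub_eq_add_neg] at hi
  have hvi : v ∈ D i := by simpa using hi.self_of_nhdsWithin self_mem_Ici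
  have hvj : v ∈ D j := by simpa using hj.self_of_nhdsWithin self_mem_Ici
  have hsmall : ∀ h₀ : ℝ, 0 < h₀ → v - h₀ • ω ∈ D i → v + h₀ • ω ∈ D j →
      ∃ h ∈ Ioc 0 h₀, F v ≤ (F (v - h • ω) + F (v + h • ω)) / 2 := by
    intro h₀ hh₀ hi₀ hj₀
    rcases eq_or_ne i j with rfl | hij
    · refine ⟨h₀, ⟨hh₀, le_rfl⟩, ?_⟩
      have := (hF i).2 hi₀ hj₀ (by norm_num : (0 : ℝ) ≤ 1 / 2) (by norm_num : (0 : ℝ) ≤ 1 / 2)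
        (by norm_num)
      rw [show (1 / 2 : ℝ) • (v - h₀ • ω) + (1 / 2 : ℝ) • (v + h₀ • ω) = v by module] at this
      simp only [smul_eq_mul] at this
      linarith
    · obtain ⟨t, ht, hle⟩ := hmid i j hij v ⟨hvi, hvj⟩
        (fun k hki hkj => notMem_of_notMem_tripleLocus hv hij hvi hvj hki hkj) (h₀ • ω)
        (smul_ne_zero hh₀.ne' hω) hi₀ hj₀
      refine ⟨t * h₀, ⟨by have := ht.1; positivity, by nlinarith [ht.2]⟩, ?_⟩
      simpa only [smul_smul] using hle
  intro hnot
  have hev : ∀ᶠ h in 𝓝[>] (0 : ℝ), (v - h • ω ∈ D i ∧ v + h • ω ∈ D j) ∧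
      ¬ F v ≤ (F (v - h • ω) + F (v + h • ω)) / 2 :=
    ((hi.and hj).filter_mono (nhdsWithin_mono _ Ioi_subset_Ici_self)).and hnot
  obtain ⟨u, hu, hsub⟩ := mem_nhdsGT_iff_exists_Ioo_subset.1 hev
  have hu2 : u / 2 ∈ Ioo 0 u := ⟨by linarith [mem_Ioi.1 hu], by linarith [mem_Ioi.1 hu]⟩
  obtain ⟨h, hh, hle⟩ := hsmall (u / 2) hu2.1 (hsub hu2).1.1 (hsub hu2).1.2
  exact (hsub ⟨hh.1, hh.2.trans_lt hu2.2⟩).2 hle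

theorem le_chord_of_disjoint_segment_tripleLocus [Finite ι] {D : ι → Set E}
    (hconv : ∀ i, Convex ℝ (D i)) (hclosed : ∀ i, IsClosed (D i)) (hcover : ⋃ i, D i = univ)
    {F : E → ℝ} (hFc : Continuous F) (hF : ∀ i, ConvexOn ℝ (D i) F)
    (hmid : InterfaceMidpointCondition D F) {x y : E}
    (hxy : Disjoint (segment ℝ x y) (tripleLocus D)) {a b : ℝ} (ha : 0 ≤ a) (hb : 0 ≤ b)
    (hab : a + b = 1) : F (a • x + b • y) ≤ a * F x + b * F y := by
  rcases eq_or_ne x y with rfl | hne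
  · rw [Convex.combo_self hab, ← add_mul, hab, one_mul]
  have hloc : ∀ t ∈ Ioo (0 : ℝ) 1, ∃ᶠ h in 𝓝[>] 0, F (AffineMap.lineMap x y t) ≤
      (F (AffineMap.lineMap x y (t - h)) + F (AffineMap.lineMap x y (t + h))) / 2 := by
    intro t ht
    have hv : AffineMap.lineMap x y t ∉ tripleLocus D := hxy.notMem_of_mem_left <| by
      rw [segment_eq_image_lineMap]; exact mem_image_of_mem _ (Ioo_subset_Icc_self ht)
    simpa only [sub_eq_add_neg, AffineMap.lineMap_add, neg_smul] using
      frequently_le_midpoint_of_notMem_tripleLocus hconv hclosed hcover hF hmid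
        (sub_ne_zero.2 hne.symm) hv
  obtain rfl : a = 1 - b := by linarith
  simpa [AffineMap.lineMap_apply_module] using
    le_chord_of_frequently_le_midpoint (by fun_prop) hloc ⟨hb, by linarith⟩

theorem convexOn_univ_of_convexOn_cells [Finite ι] [FiniteDimensional ℝ E] {D : ι → Set E}
    (hconv : ∀ i, Convex ℝ (D i)) (hclosed : ∀ i, IsClosed (D i))
    (hint : ∀ i, (interior (D i)).Nonempty)
    (hdisj : Pairwise fun i j => Disjoint (interior (D i)) (interior (D j)))
    (hcover : ⋃ i, D i = univ) {F : E → ℝ} (hFc : Continuous F)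
    (hF : ∀ i, ConvexOn ℝ (D i) F) (hmid : InterfaceMidpointCondition D F) :
    ConvexOn ℝ univ F := by
  obtain ⟨S, hS, hcodim, hsub⟩ := exists_finite_affineSubspaces_tripleLocus_subset hconv hint hdisj
  exact convexOn_univ_of_dense hFc
    ((dense_setOf_disjoint_segment_biUnion hS hcodim).mono fun p hp => hp.mono_right hsub)
    fun p hp _ _ => le_chord_of_disjoint_segment_tripleLocus hconv hclosed hcover hFc hF hmid hp

theorem strictConvexOn_univ_of_strictConvexOn_cells [Finite ι] {D : ι → Set E}
    (hconv : ∀ i, Convex ℝ (D i)) (hclosed : ∀ i, IsClosed (D i)) (hcover : ⋃ i, D i = univ)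
    {F : E → ℝ} (hF : ConvexOn ℝ univ F) (hstrict : ∀ i, StrictConvexOn ℝ (D i) F) :
    StrictConvexOn ℝ univ F := by
  refine ⟨convex_univ, fun x _ y _ hxy a b ha hb hab => ?_⟩
  obtain rfl : a = 1 - b := by linarith
  have hg : ConvexOn ℝ (Icc 0 1) fun t : ℝ => F (AffineMap.lineMap x y t) :=
    (hF.comp_affineMap (AffineMap.lineMap x y)).subset (subset_univ _) (convex_Icc 0 1)
  obtain ⟨i, hi⟩ := exists_eventually_mem_of_iUnion_eq_univ hconv hclosed hcover
    (AffineMap.lineMap x y b) (y - x)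
  obtain ⟨s, ⟨hs, hbs⟩, hsi⟩ : ∃ s, (0 < s ∧ s < 1 - b) ∧
      AffineMap.lineMap x y b + s • (y - x) ∈ D i :=
    ((eventually_mem_nhdsWithin.and (nhdsWithin_le_nhds (eventually_lt_nhds (by linarith)))).and
      (hi.filter_mono (nhdsWithin_mono _ Ioi_subset_Ici_self))).exists
  have hbi : AffineMap.lineMap x y b ∈ D i := by simpa using hi.self_of_nhdsWithin self_mem_Ici
  have hstrict_mid := (hstrict i).2 hbi hsi (by simp [hs.ne', sub_eq_zero, hxy.symm])
    (by norm_num : (0 : ℝ) < 1 / 2) (by norm_num : (0 : ℝ) < 1 / 2) (by norm_num)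
  rw [show (1 / 2 : ℝ) • AffineMap.lineMap x y b + (1 / 2 : ℝ) • (AffineMap.lineMap x y b +
    s • (y - x)) = AffineMap.lineMap x y (b + s / 2) by rw [AffineMap.lineMap_add]; module,
    ← AffineMap.lineMap_add] at hstrict_mid
  simp only [smul_eq_mul] at hstrict_mid
  have hchord_b := hg.le_chord ⟨hb.le, by linarith⟩
  have hchord_bs := hg.le_chord (t := b + s) ⟨by linarith, by linarith⟩
  have := hg.lt_chord_of_lt_chord hb (c := b + s / 2) (by linarith) (by linarith) (by linarith)
  simpa [AffineMap.lineMap_apply_module] using this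

end Cells

/-- pasting convex functions defined on a finite partition of `ℝ^d` into
polyhedral cells. If a continuous `F` is convex on each cell, and at every point `v` lying
in exactly two cells `D i`, `D j` the midpoint condition holds for every direction `ω`
crossing from `D i` to `D j`, then `F` is convex; if `F` is strictly convex on each cell,
then `F` is strictly convex. -/
theorem paste_convex_on_polyhedral_cells (m : ℕ)
    (D : Fin m → Set (EuclideanSpace ℝ (Fin d)))
    (hcell : ∀ i, IsPolyhedralCell (D i))
    (hcover : (⋃ i, D i) = Set.univ)
    (hdisj : ∀ i j, i ≠ j → interior (D i) ∩ interior (D j) = ∅)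
    (F : EuclideanSpace ℝ (Fin d) → ℝ) (hFcont : Continuous F)
    (hFconv : ∀ i, ConvexOn ℝ (D i) F)
    (hmid : ∀ i j, i ≠ j → ∀ v ∈ D i ∩ D j, (∀ k, k ≠ i → k ≠ j → v ∉ D k) →
      ∀ ω : EuclideanSpace ℝ (Fin d), ω ≠ 0 → v - ω ∈ D i → v + ω ∈ D j →
        ∃ t ∈ Set.Ioo (0 : ℝ) 1, F v ≤ (F (v - t • ω) + F (v + t • ω)) / 2) :
    ConvexOn ℝ Set.univ F ∧
      ((∀ i, StrictConvexOn ℝ (D i) F) → StrictConvexOn ℝ Set.univ F) := by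
  have hconv : ∀ i, Convex ℝ (D i) := fun i => (hcell i).1
  have hclosed : ∀ i, IsClosed (D i) := fun i => (hcell i).2.1
  have hconvexF : ConvexOn ℝ univ F :=
    convexOn_univ_of_convexOn_cells hconv hclosed (fun i => (hcell i).2.2.1)
      (fun i j hij => disjoint_iff_inter_eq_empty.2 (hdisj i j hij)) hcover hFcont hFconv hmid
  exact ⟨hconvexF, strictConvexOn_univ_of_strictConvexOn_cells hconv hclosed hcover hconvexF⟩
end
end
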